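/- arXiv:1808.02092 — 2 statements merged into one kernel-verified Lean document; each statement's English description precedes it below -/
import Mathlib

section
/- Let k be any field and Q the 2-Kronecker quiver with two vertices 1, 2 and two arrows a, b : 1 → 2. For i ≥ 0 let Q_i denote the representation with Q_i(1) = k^{i+1}, Q_i(2) = k^i, where a acts as the matrix [id 0] (the i×i identity followed by a zero column block) and b acts as [0 id] (a zero column block followed by the i×i identity). Then the family {Q_i : i ≥ 0} of representations of Q is hyperfinite. -/
/-!
Hyperfiniteness for families of finite-dimensional representations of finite quivers,
following Elek.
-/

universe u

/-- A finite quiver: finite sets of vertices and arrows, with source and target maps. -/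
structure FinQuiver : Type 1 where
  vertex : Type
  arrow : Type
  [vertexFintype : Fintype vertex]
  [arrowFintype : Fintype arrow]
  src : arrow → vertex
  tgt : arrow → vertex

attribute [instance] FinQuiver.vertexFintype FinQuiver.arrowFintype

/-- A finite-dimensional `k`-representation of a finite quiver `Q`: a finite-dimensional
`k`-vector space at each vertex and a `k`-linear map along each arrow. -/
structure QuivRep (k : Type u) [Field k] (Q : FinQuiver) : Type (u+1) where
  space : Q.vertex → Type u
  [acg : ∀ i, AddCommGroup (space i)]
  [mod : ∀ i, Module k (space i)]
  [fd : ∀ i, FiniteDimensional k (space i)]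
  map : ∀ a : Q.arrow, space (Q.src a) →ₗ[k] space (Q.tgt a)

attribute [instance] QuivRep.acg QuivRep.mod QuivRep.fd

variable {k : Type u} [Field k] {Q : FinQuiver}

/-- The total dimension of a representation. -/
noncomputable def QuivRep.dim (M : QuivRep k Q) : ℕ :=
  ∑ i : Q.vertex, Module.finrank k (M.space i)

/-- A subrepresentation: a subspace at each vertex, compatible with all arrow maps. -/
structure SubRep (M : QuivRep k Q) : Type u where
  toFun : ∀ i : Q.vertex, Submodule k (M.space i)
  compat : ∀ (a : Q.arrow) (x : M.space (Q.src a)),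
    x ∈ toFun (Q.src a) → M.map a x ∈ toFun (Q.tgt a)

/-- The total dimension of a subrepresentation. -/
noncomputable def SubRep.dim {M : QuivRep k Q} (P : SubRep M) : ℕ :=
  ∑ i : Q.vertex, Module.finrank k (P.toFun i)

/-- A set `𝓜` of finite-dimensional representations of `Q` is *hyperfinite* if for every
`ε > 0` there is `L_ε > 0` such that every `M ∈ 𝓜` has a subrepresentation `P` with
`dim P ≥ (1 - ε) · dim M` which is isomorphic to a finite direct sum of representations of
dimension at most `L_ε`; equivalently, `P` is the internal direct sum (vertexwise) of
finitely many subrepresentations `N j`, each of dimension at most `L_ε`. -/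
def QuivRepHyperfinite (𝓜 : Set (QuivRep k Q)) : Prop :=
  ∀ ε : ℝ, 0 < ε → ∃ L : ℕ, 0 < L ∧
    ∀ M ∈ 𝓜, ∃ P : SubRep M,
      (1 - ε) * (M.dim : ℝ) ≤ (P.dim : ℝ) ∧
      ∃ (t : ℕ) (N : Fin t → SubRep M),
        (∀ j, (N j).dim ≤ L) ∧
        (∀ i : Q.vertex, iSupIndep fun j => (N j).toFun i) ∧
        (∀ i : Q.vertex, (⨆ j, (N j).toFun i) = P.toFun i)

/-- The path algebra `kQ` is of amenable representation type if the family of all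
finite-dimensional representations of `Q` is hyperfinite. -/
def QuivRepAmenable (k : Type u) [Field k] (Q : FinQuiver) : Prop :=
  QuivRepHyperfinite (Set.univ : Set (QuivRep k Q))

/-- The 2-Kronecker quiver: vertices `false = 1` and `true = 2`, arrows `false = a` and
`true = b`, both from vertex `1` to vertex `2`. -/
def Kronecker : FinQuiver where
  vertex := Bool
  arrow := Bool
  src := fun _ => false
  tgt := fun _ => true

/-- The representation of the 2-Kronecker quiver with spaces `k^n` (at vertex `1`) and
`k^m` (at vertex `2`), where the arrow `a` acts via the matrix `A` and the arrow `b` acts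
via the matrix `B`. -/
noncomputable def kronRep (k : Type u) [Field k] (n m : ℕ)
    (A B : Matrix (Fin m) (Fin n) k) : QuivRep k Kronecker where
  space := fun v => Bool.rec (Fin n → k) (Fin m → k) v
  acg := fun v => by cases v <;> infer_instance
  mod := fun v => by cases v <;> infer_instance
  fd := fun v => by cases v <;> infer_instance
  map := fun a => Matrix.toLin' (cond a B A)

/-- The matrix `[id 0]` : the `i × i` identity followed by a zero column block. -/
def idZeroColMat (k : Type u) [Field k] (i : ℕ) : Matrix (Fin i) (Fin (i + 1)) k :=
  Matrix.of fun r c => if (r : ℕ) = (c : ℕ) then 1 else 0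

/-- The matrix `[0 id]` : a zero column block followed by the `i × i` identity. -/
def zeroIdColMat (k : Type u) [Field k] (i : ℕ) : Matrix (Fin i) (Fin (i + 1)) k :=
  Matrix.of fun r c => if (r : ℕ) + 1 = (c : ℕ) then 1 else 0

/-- The indecomposable preinjective representation `Q_i` of the 2-Kronecker quiver:
`Q_i(1) = k^{i+1}`, `Q_i(2) = k^i`, `a` acts as `[id 0]` and `b` acts as `[0 id]`. -/
noncomputable def kronQ (k : Type u) [Field k] (i : ℕ) : QuivRep k Kronecker :=
  kronRep k (i + 1) i (idZeroColMat k i) (zeroIdColMat k i)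

/-!
Write `e_0, …, e_i` and `f_0, …, f_{i-1}` for the standard bases of `Q_i(1)` and `Q_i(2)`, so
that `a e_c = f_c` and `b e_c = f_{c-1}`: `Q_i` is the zigzag string
`e_0 — f_0 — e_1 — ⋯ — f_{i-1} — e_i`. For `m ≥ 1/ε`, delete the vectors `e_c` with `m ∣ c + 1`.
This costs at most `(i + 1) / m ≤ ε (i + 1)` dimensions, and the remaining basis vectors span a
subrepresentation that is the direct sum of the pieces of the string between consecutive deleted
vectors: put `e_c` in block `c / m` and `f_r` in block `(r + 1) / m`; then every kept `e_c` lies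
in the same block as its neighbours `f_{c-1}` and `f_c`. Each block has dimension at most `2m`.
-/
open Module Submodule Finset Function

theorem LinearIndependent.iSupIndep_span_image {ι κ R M : Type*} [Ring R] [AddCommGroup M]
    [Module R M] {v : ι → M} (hv : LinearIndependent R v) {f : κ → Set ι}
    (hf : Pairwise (Disjoint on f)) : iSupIndep fun j => span R (v '' f j) := by
  intro j
  have hsup : ⨆ (l) (_ : l ≠ j), span R (v '' f l) = span R (v '' ⋃ (l) (_ : l ≠ j), f l) := by
    simp only [Set.image_iUnion, Submodule.span_iUnion]
  rw [hsup]
  exact hv.disjoint_span_image (Set.disjoint_iUnion₂_right.2 fun l hl => hf hl.symm)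

theorem LinearIndependent.finrank_span_image {ι R M : Type*} [Ring R] [Nontrivial R]
    [StrongRankCondition R] [AddCommGroup M] [Module R M] {v : ι → M}
    (hv : LinearIndependent R v) (s : Finset ι) : finrank R (span R (v '' s)) = #s := by
  rw [Set.image_eq_range]
  exact (finrank_span_eq_card (hv.comp _ Subtype.val_injective)).trans (by simp)

theorem iSup_span_image_fiber {ι κ R M : Type*} [DecidableEq κ] [Semiring R] [AddCommMonoid M]
    [Module R M] (v : ι → M) (S : Finset ι) (f : ι → κ) :
    ⨆ j, span R (v '' ↑{c ∈ S | f c = j}) = span R (v '' S) := by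
  rw [← span_iUnion, ← Set.image_iUnion]
  congr; ext c; simp

theorem LinearIndependent.iSupIndep_span_image_fiber {ι κ R M : Type*} [DecidableEq κ] [Ring R]
    [AddCommGroup M] [Module R M] {v : ι → M} (hv : LinearIndependent R v) (S : Finset ι)
    (f : ι → κ) : iSupIndep fun j => span R (v '' ↑{c ∈ S | f c = j}) :=
  hv.iSupIndep_span_image fun _ _ hjl => Finset.disjoint_coe.2 <|
    Finset.disjoint_filter.2 fun _ _ h1 h2 => hjl (h1.symm.trans h2)

theorem mem_span_basisFun_image {ι R : Type*} [Finite ι] [Semiring R] {s : Set ι} {x : ι → R} :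
    x ∈ span R (Pi.basisFun R ι '' s) ↔ ∀ c ∉ s, x c = 0 := by
  rw [Basis.mem_span_image]
  simp [Set.subset_def, not_imp_comm]

theorem Matrix.toLin'_mem_span_basisFun_image {m n R : Type*} [Fintype n] [DecidableEq n]
    [Finite m] [CommSemiring R] {A : Matrix m n R} {S : Set n} {T : Set m}
    (hA : ∀ r ∉ T, ∀ c ∈ S, A r c = 0) {x : n → R} (hx : x ∈ span R (Pi.basisFun R n '' S)) :
    Matrix.toLin' A x ∈ span R (Pi.basisFun R m '' T) := by
  rw [mem_span_basisFun_image] at hx ⊢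
  intro r hr
  refine Finset.sum_eq_zero fun c _ => ?_
  by_cases hc : c ∈ S
  · simp [hA r hr c hc]
  · simp [hx c hc]

def SubRep.IsBlockSum {M : QuivRep k Q} (P : SubRep M) (L : ℕ) : Prop :=
  ∃ (t : ℕ) (N : Fin t → SubRep M), (∀ j, (N j).dim ≤ L) ∧
    (∀ i, iSupIndep fun j => (N j).toFun i) ∧ (∀ i, (⨆ j, (N j).toFun i) = P.toFun i)

theorem quivRepHyperfinite_of_linear_block_size {𝓜 : Set (QuivRep k Q)} (C : ℕ) (hC : 0 < C)
    (h : ∀ m : ℕ, 0 < m → ∀ M ∈ 𝓜,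
      ∃ P : SubRep M, m * M.dim ≤ m * P.dim + M.dim ∧ P.IsBlockSum (C * m)) :
    QuivRepHyperfinite 𝓜 := by
  intro ε hε
  have hm : 0 < ⌈ε⁻¹⌉₊ := Nat.ceil_pos.2 (inv_pos.2 hε)
  refine ⟨C * ⌈ε⁻¹⌉₊, Nat.mul_pos hC hm, fun M hM => ?_⟩
  obtain ⟨P, hP, hblocks⟩ := h _ hm M hM
  refine ⟨P, ?_, hblocks⟩
  have hP' : (⌈ε⁻¹⌉₊ : ℝ) * M.dim ≤ ⌈ε⁻¹⌉₊ * P.dim + M.dim := by exact_mod_cast hP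
  have hε' : 1 ≤ ε * ⌈ε⁻¹⌉₊ := by
    calc (1 : ℝ) = ε * ε⁻¹ := (mul_inv_cancel₀ hε.ne').symm
      _ ≤ ε * ⌈ε⁻¹⌉₊ := by gcongr; exact Nat.le_ceil _
  rcases le_total (M.dim : ℝ) P.dim with hle | hle
  · nlinarith [(M.dim.cast_nonneg : (0 : ℝ) ≤ M.dim)]
  · calc (1 - ε) * M.dim = M.dim - ε * (M.dim - P.dim) - ε * P.dim := by ring
      _ ≤ M.dim - ε * ⌈ε⁻¹⌉₊ * (M.dim - P.dim) := by nlinarith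
      _ ≤ P.dim := by nlinarith

theorem kronRep_dim (n m : ℕ) (A B : Matrix (Fin m) (Fin n) k) :
    (kronRep k n m A B).dim = n + m := by
  change ∑ v : Bool, _ = _
  rw [Fintype.sum_bool, add_comm]
  exact congr_arg₂ (· + ·) (finrank_fin_fun k) (finrank_fin_fun k)

noncomputable def kronCoordSubRep {n m : ℕ} {A B : Matrix (Fin m) (Fin n) k}
    (S : Finset (Fin n)) (T : Finset (Fin m))
    (hST : ∀ r ∉ T, ∀ c ∈ S, A r c = 0 ∧ B r c = 0) : SubRep (kronRep k n m A B) where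
  toFun v := match v with
    | false => (span k (Pi.basisFun k _ '' S) : Submodule k (Fin n → k))
    | true => (span k (Pi.basisFun k _ '' T) : Submodule k (Fin m → k))
  compat a x hx := by
    cases a
    · exact Matrix.toLin'_mem_span_basisFun_image (fun r hr c hc => (hST r hr c hc).1) hx
    · exact Matrix.toLin'_mem_span_basisFun_image (fun r hr c hc => (hST r hr c hc).2) hx

theorem kronCoordSubRep_dim {n m : ℕ} {A B : Matrix (Fin m) (Fin n) k}
    (S : Finset (Fin n)) (T : Finset (Fin m)) (hST : ∀ r ∉ T, ∀ c ∈ S, A r c = 0 ∧ B r c = 0) :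
    (kronCoordSubRep S T hST).dim = #S + #T := by
  change ∑ v : Bool, _ = _
  rw [Fintype.sum_bool, add_comm]
  exact congr_arg₂ (· + ·) ((Pi.basisFun k _).linearIndependent.finrank_span_image S)
    ((Pi.basisFun k _).linearIndependent.finrank_span_image T)

theorem kronCoordSubRep_isBlockSum {n m t L : ℕ} {A B : Matrix (Fin m) (Fin n) k}
    {S : Finset (Fin n)} {T : Finset (Fin m)} (hST : ∀ r ∉ T, ∀ c ∈ S, A r c = 0 ∧ B r c = 0)
    (f : Fin n → Fin t) (g : Fin m → Fin t)
    (hfib : ∀ j, ∀ r ∉ {r ∈ T | g r = j}, ∀ c ∈ {c ∈ S | f c = j}, A r c = 0 ∧ B r c = 0)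
    (hL : ∀ j, #{c ∈ S | f c = j} + #{r ∈ T | g r = j} ≤ L) :
    (kronCoordSubRep S T hST).IsBlockSum L := by
  refine ⟨t, fun j => kronCoordSubRep _ _ (hfib j),
    fun j => (kronCoordSubRep_dim _ _ _).trans_le (hL j), fun v => ?_, fun v => ?_⟩
  · cases v
    · exact (Pi.basisFun k _).linearIndependent.iSupIndep_span_image_fiber S f
    · exact (Pi.basisFun k _).linearIndependent.iSupIndep_span_image_fiber T g
  · cases v
    · exact iSup_span_image_fiber _ S f
    · exact iSup_span_image_fiber _ T g

theorem kronQ_entries_eq_zero {i : ℕ} {S : Finset (Fin (i + 1))} {T : Finset (Fin i)}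
    (hST : ∀ r : Fin i, r.castSucc ∈ S ∨ r.succ ∈ S → r ∈ T) :
    ∀ r ∉ T, ∀ c ∈ S, idZeroColMat k i r c = 0 ∧ zeroIdColMat k i r c = 0 := by
  intro r hr c hc
  refine ⟨if_neg fun h => hr (hST r (.inl ?_)), if_neg fun h => hr (hST r (.inr ?_))⟩
  · rwa [show r.castSucc = c from Fin.ext h]
  · rwa [show r.succ = c from Fin.ext h]

def blockIndex {n : ℕ} (m : ℕ) (c : Fin n) : Fin n :=
  ⟨c / m, (Nat.div_le_self _ _).trans_lt c.isLt⟩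

theorem card_blockIndex_fiber_le {n m : ℕ} (hm : 0 < m) (j : Fin n) :
    #{c | blockIndex m c = j} ≤ m := by
  calc #{c | blockIndex m c = j}
      ≤ #(range m) := by
        refine card_le_card_of_injOn (fun c => (c : ℕ) % m)
          (fun c _ => by simpa using Nat.mod_lt _ hm) fun c hc c' hc' hcc => Fin.ext ?_
        simp only [coe_filter, mem_univ, true_and, Set.mem_ofPred_eq, blockIndex,
          Fin.ext_iff] at hc hc'
        rw [← Nat.div_add_mod c m, ← Nat.div_add_mod c' m, hc, hc']
        exact congrArg _ hcc
    _ = m := card_range m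

noncomputable def kronQTrunc (k : Type u) [Field k] (i m : ℕ) : SubRep (kronQ k i) :=
  kronCoordSubRep {c | ¬ m ∣ (c : ℕ) + 1} univ fun r hr => absurd (mem_univ r) hr

theorem kronQTrunc_codim_le (i m : ℕ) :
    m * (kronQ k i).dim ≤ m * (kronQTrunc k i m).dim + (kronQ k i).dim := by
  have hdvd : #{c : Fin (i + 1) | m ∣ (c : ℕ) + 1} = (i + 1) / m := by
    rw [← Nat.card_multiples, ← card_map Fin.valEmbedding]
    congr 1; ext e; simp [Fin.exists_iff]; grind
  have hsplit := card_filter_add_card_filter_not (s := (univ : Finset (Fin (i + 1))))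
    (p := fun c => m ∣ (c : ℕ) + 1)
  rw [card_univ, Fintype.card_fin, hdvd] at hsplit
  have hdiv := Nat.div_mul_le_self (i + 1) m
  have hP : (kronQTrunc k i m).dim = #{c : Fin (i + 1) | ¬ m ∣ (c : ℕ) + 1} + i :=
    (kronCoordSubRep_dim _ _ _).trans (by rw [card_univ, Fintype.card_fin])
  rw [hP, kronQ, kronRep_dim]
  nlinarith

theorem kronQTrunc_isBlockSum {m : ℕ} (hm : 0 < m) (i : ℕ) :
    (kronQTrunc k i m).IsBlockSum (2 * m) := by
  refine kronCoordSubRep_isBlockSum _ (blockIndex m) (blockIndex m ∘ Fin.succ)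
    (fun j => kronQ_entries_eq_zero fun r hr => ?_) fun j => ?_
  · rcases hr with hr | hr <;>
      simp only [mem_filter, mem_univ, true_and, Function.comp_apply] at hr ⊢
    · rw [← hr.2]
      exact Fin.ext (by simpa [blockIndex] using Nat.succ_div_of_not_dvd hr.1)
    · exact hr.2
  · have hsrc : #{c ∈ {c | ¬ m ∣ (c : ℕ) + 1} | blockIndex m c = j} ≤ m :=
      (card_le_card fun c hc => by simp_all).trans (card_blockIndex_fiber_le hm j)
    have htgt : #{r ∈ univ | (blockIndex m ∘ Fin.succ) r = j} ≤ m :=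
      (card_le_card_of_injOn Fin.succ (fun r hr => by simpa using hr)
        (Fin.succ_injective _).injOn).trans (card_blockIndex_fiber_le hm j)
    omega

/-- the family `{Q_i : i ≥ 0}` of indecomposable preinjective
representations of the 2-Kronecker quiver is hyperfinite, over any field. -/
theorem stmt_12 {k : Type u} [Field k] :
    QuivRepHyperfinite (Set.range (kronQ k)) :=
  quivRepHyperfinite_of_linear_block_size 2 two_pos fun _ hm _ ⟨i, hi⟩ =>
    hi ▸ ⟨kronQTrunc k i _, kronQTrunc_codim_le i _, kronQTrunc_isBlockSum hm i⟩
end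

section
/- Let k be a field, A and B two finite-dimensional k-algebras, and {M_n : n ∈ ℕ} a set of finite-dimensional A-modules that is not hyperfinite. Suppose there exist constants K₁, K₂ > 0 and additive functors F from finite-dimensional A-modules to finite-dimensional B-modules and G from finite-dimensional B-modules to finite-dimensional A-modules such that: G(F(M_n)) ≅ M_n for all n ∈ ℕ; G is left exact; K₁·dim_k F(M_n) ≤ dim_k G(F(M_n)) for all n ∈ ℕ; and dim_k G(X) ≤ K₂·dim_k X for all finite-dimensional B-modules X. Then the set {F(M_n) : n ∈ ℕ} of B-modules is not hyperfinite. -/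
/-!
Hyperfiniteness for families of finite-dimensional modules over a
finite-dimensional algebra `A` over a field `k`, following Elek.

A finite-dimensional `A`-module is bundled as a type together with an
`A`-module structure, a compatible `k`-vector space structure, which is
finite-dimensional over `k`.
-/

universe u

structure FdModule (k A : Type u) [Field k] [Ring A] [Algebra k A] : Type (u+1) where
  carrier : Type u
  [acg : AddCommGroup carrier]
  [modA : Module A carrier]
  [modk : Module k carrier]
  [tower : IsScalarTower k A carrier]
  [fd : FiniteDimensional k carrier]

attribute [instance] FdModule.acg FdModule.modA FdModule.modk FdModule.tower FdModule.fd

variable {k A : Type u} [Field k] [Ring A] [Algebra k A]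

/-- The `k`-dimension of a finite-dimensional `A`-module. -/
noncomputable def FdModule.dim (M : FdModule k A) : ℕ := Module.finrank k M.carrier

/-- A set `𝓜` of finite-dimensional `A`-modules is *hyperfinite* if for every `ε > 0`
there is `L_ε > 0` such that every `M ∈ 𝓜` has an `A`-submodule `P` with
`dim_k P ≥ (1 - ε) · dim_k M` which is isomorphic to a finite direct sum of modules of
`k`-dimension at most `L_ε`; equivalently, `P` is the internal direct sum of finitely
many submodules `N j` of `k`-dimension at most `L_ε`. -/
def Hyperfinite (𝓜 : Set (FdModule k A)) : Prop :=
  ∀ ε : ℝ, 0 < ε → ∃ L : ℕ, 0 < L ∧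
    ∀ M ∈ 𝓜, ∃ P : Submodule A M.carrier,
      (1 - ε) * (M.dim : ℝ) ≤ (Module.finrank k P : ℝ) ∧
      ∃ (t : ℕ) (N : Fin t → Submodule A M.carrier),
        (∀ j, Module.finrank k (N j) ≤ L) ∧
        iSupIndep N ∧ (⨆ j, N j) = P

section Functors

variable (k A B : Type u) [Field k] [Ring A] [Algebra k A] [Ring B] [Algebra k B]

/-- An additive functor from finite-dimensional `A`-modules to finite-dimensional
`B`-modules. -/
structure FdFunctor where
  obj : FdModule k A → FdModule k B
  map : ∀ {M N : FdModule k A}, (M.carrier →ₗ[A] N.carrier) →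
    ((obj M).carrier →ₗ[B] (obj N).carrier)
  map_id : ∀ M : FdModule k A, map (LinearMap.id (M := M.carrier)) = LinearMap.id
  map_comp : ∀ {M N P : FdModule k A} (f : M.carrier →ₗ[A] N.carrier)
    (g : N.carrier →ₗ[A] P.carrier), map (g ∘ₗ f) = map g ∘ₗ map f
  map_add : ∀ {M N : FdModule k A} (f g : M.carrier →ₗ[A] N.carrier),
    map (f + g) = map f + map g

variable {k A B}

/-- A functor is left exact if it preserves kernels: it maps any exact sequence
`0 → X → Y → Z` to an exact sequence `0 → F X → F Y → F Z`. -/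
def FdFunctor.LeftExact (F : FdFunctor k A B) : Prop :=
  ∀ {X Y Z : FdModule k A} (f : X.carrier →ₗ[A] Y.carrier) (g : Y.carrier →ₗ[A] Z.carrier),
    Function.Injective f → LinearMap.range f = LinearMap.ker g →
    Function.Injective (F.map f) ∧ LinearMap.range (F.map f) = LinearMap.ker (F.map g)

end Functors

/-!
Suppose `{F (M n)}` were hyperfinite, and write `X = F (M n)`, so that `G X ≅ M n`. Up to a small
fraction, `X` is a direct sum `P = ⨁ N j` of pieces of bounded dimension. The decomposition of `P`
is encoded by complete orthogonal idempotents of `End P`, which the additive functor `G` carries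
to complete orthogonal idempotents of `End (G P)`; hence `G P` is an internal direct sum of
submodules of dimension at most `dim G (N j) ≤ K₂ L`. Left exactness embeds `G P` into `G X` as the
kernel of `G X → G (X / P)`, so its codimension is at most `dim G (X / P) ≤ K₂ dim (X / P)`, which
is at most `ε dim G X` once the fraction of `X` missed by `P` is at most `K₁ ε / K₂`.
-/

open Module LinearMap

section LinearAlgebra

variable {R M : Type*} [Ring R] [AddCommGroup M] [Module R M] {ι : Type*}

theorem Submodule.isInternal_comap_iSup_subtype [DecidableEq ι] {N : ι → Submodule R M}
    (hN : iSupIndep N) : DirectSum.IsInternal fun i => (N i).comap (⨆ i, N i).subtype := by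
  set P := ⨆ i, N i
  have hmap i : ((N i).comap P.subtype).map P.subtype = N i := by
    rw [Submodule.map_comap_subtype, inf_of_le_right (le_iSup N i)]
  refine (DirectSum.isInternal_submodule_iff_iSupIndep_and_iSup_eq_top _).mpr ⟨?_, ?_⟩
  · rw [← iSupIndep_map_orderIso_iff P.mapIic]
    refine .of_coe_Iic_comp ?_
    convert hN using 1
    exact funext hmap
  · rw [← Submodule.comap_iSup_map_of_injective P.injective_subtype]
    simp only [hmap, P, Submodule.comap_subtype_self]

theorem DirectSum.IsInternal.exists_completeOrthogonalIdempotents [Fintype ι] [DecidableEq ι]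
    {N : ι → Submodule R M} (hN : DirectSum.IsInternal N) :
    ∃ e : ι → Module.End R M, CompleteOrthogonalIdempotents e ∧ ∀ i, range (e i) ≤ N i := by
  let := hN.chooseDecomposition
  let e i : Module.End R M :=
    (N i).subtype ∘ₗ DirectSum.component R ι _ i ∘ₗ (DirectSum.decomposeLinearEquiv N).toLinearMap
  have he (i x) : e i x = (DirectSum.decompose N x i : M) := rfl
  refine ⟨e, CompleteOrthogonalIdempotents.iff_ortho_complete.mpr ⟨fun i j hij => ?_, ?_⟩, ?_⟩
  · ext x
    exact DirectSum.decompose_of_mem_ne N (Submodule.coe_mem _) hij.symm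
  · refine DirectSum.decompose_lhom_ext N fun i => ?_
    ext ⟨x, hx⟩
    simp only [coe_comp, Function.comp_apply, Submodule.coe_subtype, LinearMap.sum_apply, he,
      Module.End.one_apply]
    rw [Finset.sum_eq_single i (fun j _ hji => DirectSum.decompose_of_mem_ne N hx hji.symm)
      (by simp), DirectSum.decompose_of_mem_same N hx]
  · rintro i _ ⟨x, rfl⟩
    exact Submodule.coe_mem _

theorem CompleteOrthogonalIdempotents.isInternal_range [Fintype ι] [DecidableEq ι]
    {e : ι → Module.End R M} (he : CompleteOrthogonalIdempotents e) :
    DirectSum.IsInternal fun i => range (e i) := by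
  refine (DirectSum.isInternal_submodule_iff_iSupIndep_and_iSup_eq_top _).mpr ⟨fun j => ?_, ?_⟩
  · have hker : (⨆ i, ⨆ (_ : i ≠ j), range (e i)) ≤ ker (e j) :=
      iSup₂_le fun i hij => range_le_ker_iff.mpr (he.ortho hij.symm)
    exact (LinearMap.IsIdempotentElem.isCompl (he.idem j)).disjoint.mono_right hker
  · refine eq_top_iff.mpr fun x _ => ?_
    have hx : ∑ i, e i x = x := by rw [← LinearMap.sum_apply, he.complete, Module.End.one_apply]
    exact hx ▸ Submodule.sum_mem _ fun i _ => Submodule.mem_iSup_of_mem i (mem_range_self _ _)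

end LinearAlgebra

namespace FdModule

variable (X : FdModule k A) (P : Submodule A X.carrier)

abbrev ofSubmodule : FdModule k A where
  carrier := P
  fd := FiniteDimensional.of_injective (P.subtype.restrictScalars k) P.injective_subtype

abbrev quotient : FdModule k A where
  carrier := X.carrier ⧸ P
  fd := Module.Finite.of_surjective (P.mkQ.restrictScalars k) P.mkQ_surjective

/-- The condition of `Hyperfinite` on a single module, with the almost-full submodule `P` taken to
be `⨆ j, N j`. -/
def AlmostDecomposes (M : FdModule k A) (ε : ℝ) (L : ℕ) : Prop :=
  ∃ (t : ℕ) (N : Fin t → Submodule A M.carrier),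
    (∀ j, finrank k (N j) ≤ L) ∧ iSupIndep N ∧ (1 - ε) * (M.dim : ℝ) ≤ finrank k ↥(⨆ j, N j)

theorem AlmostDecomposes.of_linearEquiv {M M' : FdModule k A} {ε : ℝ} {L : ℕ}
    (h : M.AlmostDecomposes ε L) (e : M.carrier ≃ₗ[A] M'.carrier) : M'.AlmostDecomposes ε L := by
  obtain ⟨t, N, hNL, hN, hP⟩ := h
  let f : M.carrier →ₗ[A] M'.carrier := e
  have hmap (p : Submodule A M.carrier) : finrank k (p.map f) = finrank k p :=
    ((p.equivMapOfInjective f e.injective).restrictScalars k).finrank_eq.symm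
  refine ⟨t, fun j => (N j).map f, fun j => (hmap (N j)).trans_le (hNL j),
    f.iSupIndep_map e.injective hN, ?_⟩
  have hdim : M'.dim = M.dim := (e.restrictScalars k).finrank_eq.symm
  rw [← Submodule.map_iSup, hmap, hdim]
  exact hP

end FdModule

theorem hyperfinite_iff {𝓜 : Set (FdModule k A)} :
    Hyperfinite 𝓜 ↔ ∀ ε : ℝ, 0 < ε → ∃ L : ℕ, 0 < L ∧ ∀ M ∈ 𝓜, M.AlmostDecomposes ε L := by
  refine forall₂_congr fun ε _ => exists_congr fun L => and_congr_right fun _ =>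
    forall₂_congr fun M _ => ⟨?_, ?_⟩
  · rintro ⟨P, hP, t, N, hNL, hN, rfl⟩
    exact ⟨t, N, hNL, hN, hP⟩
  · rintro ⟨t, N, hNL, hN, hP⟩
    exact ⟨_, hP, t, N, hNL, hN, rfl⟩

theorem Hyperfinite.of_forall_linearEquiv {𝓜 𝓝 : Set (FdModule k A)} (h𝓝 : Hyperfinite 𝓝)
    (h : ∀ M ∈ 𝓜, ∃ N ∈ 𝓝, Nonempty (N.carrier ≃ₗ[A] M.carrier)) : Hyperfinite 𝓜 := by
  rw [hyperfinite_iff] at h𝓝 ⊢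
  refine fun ε hε => (h𝓝 ε hε).imp fun L ⟨hL, hdec⟩ => ⟨hL, fun M hM => ?_⟩
  obtain ⟨N, hN, ⟨e⟩⟩ := h M hM
  exact (hdec N hN).of_linearEquiv e

namespace FdFunctor

variable {B : Type u} [Ring B] [Algebra k B]

def mapEnd (F : FdFunctor k A B) (M : FdModule k A) :
    Module.End A M.carrier →+* Module.End B (F.obj M).carrier :=
  RingHom.mk' ⟨⟨F.map, F.map_id M⟩, fun f g => F.map_comp g f⟩ F.map_add

theorem finrank_range_map_comp_le (F : FdFunctor k A B) {M N P : FdModule k A}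
    (f : M.carrier →ₗ[A] N.carrier) (g : N.carrier →ₗ[A] P.carrier) :
    finrank k (range (F.map (g ∘ₗ f))) ≤ (F.obj N).dim :=
  calc finrank k (range (F.map (g ∘ₗ f)))
      ≤ finrank k (range (F.map g)) := by
        rw [F.map_comp]
        exact Submodule.finrank_mono (Submodule.restrictScalars_mono k (range_comp_le_range _ _))
    _ ≤ (F.obj N).dim := LinearMap.finrank_range_le ((F.map g).restrictScalars k)

variable {G : FdFunctor k B A}

theorem LeftExact.exists_iSupIndep_of_iSupIndep (hG : G.LeftExact) (X : FdModule k B) {t : ℕ}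
    {N : Fin t → Submodule B X.carrier} (hN : iSupIndep N) :
    ∃ Q : Fin t → Submodule A (G.obj X).carrier, iSupIndep Q ∧
      (∀ j, finrank k (Q j) ≤ (G.obj (X.ofSubmodule (N j))).dim) ∧
      (G.obj X).dim ≤ finrank k ↥(⨆ j, Q j) + (G.obj (X.quotient (⨆ j, N j))).dim := by
  obtain ⟨e, he, he_range⟩ : ∃ e : Fin t → Module.End B (X.ofSubmodule (⨆ j, N j)).carrier,
      CompleteOrthogonalIdempotents e ∧ ∀ j, range (e j) ≤ (N j).comap (⨆ j, N j).subtype :=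
    (Submodule.isInternal_comap_iSup_subtype hN).exists_completeOrthogonalIdempotents
  have hGe : DirectSum.IsInternal fun j => range (G.map (e j)) :=
    (he.map (G.mapEnd _)).isInternal_range
  let ι : (X.ofSubmodule (⨆ j, N j)).carrier →ₗ[B] X.carrier := Submodule.subtype _
  let π : X.carrier →ₗ[B] (X.quotient (⨆ j, N j)).carrier := Submodule.mkQ _
  obtain ⟨hGι, hGιπ⟩ := hG ι π (Submodule.injective_subtype _)
    ((Submodule.range_subtype _).trans (Submodule.ker_mkQ _).symm)
  refine ⟨fun j => (range (G.map (e j))).map (G.map ι),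
    (G.map ι).iSupIndep_map hGι hGe.submodule_iSupIndep, fun j => ?_, ?_⟩
  · have hfactor : e j = Submodule.inclusion (le_iSup N j) ∘ₗ
        ((ι ∘ₗ e j).codRestrict (N j) fun x => he_range j ⟨x, rfl⟩) := rfl
    calc finrank k ((range (G.map (e j))).map (G.map ι))
        = finrank k (range (G.map (e j))) :=
          (((range _).equivMapOfInjective _ hGι).restrictScalars k).finrank_eq.symm
      _ ≤ (G.obj (X.ofSubmodule (N j))).dim := by
          rw [hfactor]
          exact G.finrank_range_map_comp_le (N := X.ofSubmodule (N j)) _ _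
  · have hsup : ⨆ j, (range (G.map (e j))).map (G.map ι) = ker (G.map π) := by
      rw [← Submodule.map_iSup, hGe.submodule_iSup_eq_top, Submodule.map_top, hGιπ]
    have hrank : finrank k (range (G.map π)) + finrank k (ker (G.map π)) = (G.obj X).dim :=
      LinearMap.finrank_range_add_finrank_ker ((G.map π).restrictScalars k)
    have hrange : finrank k (range (G.map π)) ≤ (G.obj (X.quotient (⨆ j, N j))).dim :=
      ((range (G.map π)).restrictScalars k).finrank_le
    rw [hsup]
    omega

theorem LeftExact.almostDecomposes_obj (hG : G.LeftExact) {X : FdModule k B} {K₁ K₂ ε : ℝ}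
    {L : ℕ} (hX : X.AlmostDecomposes (K₁ * ε / K₂) L) (hK₁ : 0 < K₁) (hK₂ : 0 < K₂) (hε : 0 ≤ ε)
    (h₁ : K₁ * X.dim ≤ (G.obj X).dim) (h₂ : ∀ Y, ((G.obj Y).dim : ℝ) ≤ K₂ * Y.dim) :
    (G.obj X).AlmostDecomposes ε ⌈K₂ * L⌉₊ := by
  obtain ⟨t, N, hNL, hN, hP⟩ := hX
  obtain ⟨Q, hQ, hQN, hdim⟩ := hG.exists_iSupIndep_of_iSupIndep X hN
  refine ⟨t, Q, fun j => ?_, hQ, ?_⟩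
  · have hQL : (finrank k (Q j) : ℝ) ≤ K₂ * L :=
      calc (finrank k (Q j) : ℝ)
          ≤ (G.obj (X.ofSubmodule (N j))).dim := by exact_mod_cast hQN j
        _ ≤ K₂ * (X.ofSubmodule (N j)).dim := h₂ _
        _ ≤ K₂ * L := by gcongr; exact_mod_cast hNL j
    exact_mod_cast hQL.trans (Nat.le_ceil _)
  · have hP_le : finrank k ↥(⨆ j, N j) ≤ X.dim := ((⨆ j, N j).restrictScalars k).finrank_le
    have hquot : K₂ * (X.quotient (⨆ j, N j)).dim ≤ ε * (K₁ * X.dim) :=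
      calc K₂ * ((X.quotient (⨆ j, N j)).dim : ℝ)
          = K₂ * (X.dim - finrank k ↥(⨆ j, N j)) := by
            rw [← Nat.cast_sub hP_le]
            exact congrArg _ (congrArg _ (Submodule.finrank_quotient _))
        _ ≤ K₂ * (K₁ * ε / K₂ * X.dim) := by gcongr; linarith
        _ = ε * (K₁ * X.dim) := by field_simp
    have hGquot := h₂ (X.quotient (⨆ j, N j))
    have hdim' : ((G.obj X).dim : ℝ) ≤
        finrank k ↥(⨆ j, Q j) + (G.obj (X.quotient (⨆ j, N j))).dim := by
      exact_mod_cast hdim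
    nlinarith

theorem LeftExact.hyperfinite_image (hG : G.LeftExact) {𝓧 : Set (FdModule k B)}
    (h𝓧 : Hyperfinite 𝓧) {K₁ K₂ : ℝ} (hK₁ : 0 < K₁) (hK₂ : 0 < K₂)
    (h₁ : ∀ X ∈ 𝓧, K₁ * X.dim ≤ (G.obj X).dim) (h₂ : ∀ Y, ((G.obj Y).dim : ℝ) ≤ K₂ * Y.dim) :
    Hyperfinite (G.obj '' 𝓧) := by
  rw [hyperfinite_iff] at h𝓧 ⊢
  intro ε hε
  obtain ⟨L, hL, hdec⟩ := h𝓧 (K₁ * ε / K₂) (by positivity)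
  refine ⟨⌈K₂ * L⌉₊, Nat.ceil_pos.mpr (by positivity), ?_⟩
  rintro _ ⟨X, hX, rfl⟩
  exact hG.almostDecomposes_obj (hdec X hX) hK₁ hK₂ hε.le (h₁ X hX) h₂

end FdFunctor

theorem stmt_16_general {k A B : Type u} [Field k] [Ring A] [Algebra k A] [Ring B] [Algebra k B]
    (M : ℕ → FdModule k A) (hM : ¬ Hyperfinite (Set.range M))
    (F : FdFunctor k A B) (G : FdFunctor k B A)
    (K₁ K₂ : ℝ) (hK₁ : 0 < K₁) (hK₂ : 0 < K₂)
    (hGF : ∀ n : ℕ, Nonempty ((G.obj (F.obj (M n))).carrier ≃ₗ[A] (M n).carrier))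
    (hG : G.LeftExact)
    (h₁ : ∀ n : ℕ, K₁ * ((F.obj (M n)).dim : ℝ) ≤ ((G.obj (F.obj (M n))).dim : ℝ))
    (h₂ : ∀ X : FdModule k B, ((G.obj X).dim : ℝ) ≤ K₂ * (X.dim : ℝ)) :
    ¬ Hyperfinite (Set.range fun n => F.obj (M n)) := by
  intro hF
  refine hM ((hG.hyperfinite_image hF hK₁ hK₂ ?_ h₂).of_forall_linearEquiv ?_)
  · rintro _ ⟨n, rfl⟩
    exact h₁ n
  · rintro _ ⟨n, rfl⟩
    exact ⟨_, ⟨_, ⟨n, rfl⟩, rfl⟩, hGF n⟩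

/-- transporting non-hyperfiniteness along a pair of additive functors.
If `{M n}` is not hyperfinite, `G ∘ F` fixes each `M n` up to isomorphism, `G` is left
exact, `K₁ · dim F(M n) ≤ dim G(F(M n))` and `dim G(X) ≤ K₂ · dim X` for all `X`, then
`{F (M n)}` is not hyperfinite. -/
theorem stmt_16 {k A B : Type u} [Field k] [Ring A] [Algebra k A] [Ring B] [Algebra k B]
    [FiniteDimensional k A] [FiniteDimensional k B]
    (M : ℕ → FdModule k A) (hM : ¬ Hyperfinite (Set.range M))
    (F : FdFunctor k A B) (G : FdFunctor k B A)
    (K₁ K₂ : ℝ) (hK₁ : 0 < K₁) (hK₂ : 0 < K₂)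
    (hGF : ∀ n : ℕ, Nonempty ((G.obj (F.obj (M n))).carrier ≃ₗ[A] (M n).carrier))
    (hG : G.LeftExact)
    (h₁ : ∀ n : ℕ, K₁ * ((F.obj (M n)).dim : ℝ) ≤ ((G.obj (F.obj (M n))).dim : ℝ))
    (h₂ : ∀ X : FdModule k B, ((G.obj X).dim : ℝ) ≤ K₂ * (X.dim : ℝ)) :
    ¬ Hyperfinite (Set.range fun n => F.obj (M n)) :=
  stmt_16_general M hM F G K₁ K₂ hK₁ hK₂ hGF hG h₁ h₂
end
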